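/- Let r := H ← c ◇ B be a clause and Δ a filter that is DN for r. If ⟨B | c⟩ is Δ-more general than ⟨H | c⟩, then ⟨H | c⟩ loops with respect to {r} (admits an infinite derivation). -/

import Mathlib

/- A semantic formalization of CLP(X) queries, clauses, derivation steps,
   filters and derivation-neutrality, following Payet & Mesnard. -/

namespace CLP

variable {V D Pr : Type}

/-- A (semantic) term: its evaluation under every valuation. -/
abbrev Trm (V D : Type) := (V → D) → D
/-- A (semantic) constraint: its truth value under every valuation. -/
abbrev Cns (V D : Type) := (V → D) → Prop

/-- The term consisting of a single variable. -/
def varT (x : V) : Trm V D := fun v => v x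

/-- An atom whose arguments are domain elements. -/
structure Atom (D Pr : Type) where
  pred : Pr
  args : List D

/-- A query ⟨p(t̃) | d⟩. -/
structure Query (V D Pr : Type) where
  pred : Pr
  args : List (Trm V D)
  constr : Cns V D

/-- The set of atoms described by a query: Set(⟨p(t̃) | d⟩) = {p([t̃]_v) | D ⊨_v d}. -/
def Query.descSet (Q : Query V D Pr) : Set (Atom D Pr) :=
  { A | ∃ v : V → D, Q.constr v ∧ A = ⟨Q.pred, Q.args.map (fun t => t v)⟩ }

/-- Applying a renaming (a bijection on variables) to a query. -/
def Query.rename (γ : V ≃ V) (Q : Query V D Pr) : Query V D Pr :=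
  ⟨Q.pred, Q.args.map (fun t v => t (v ∘ γ)), fun v => Q.constr (v ∘ γ)⟩

/-- A term only depends on (is supported by) the variables in `S`. -/
def Trm.supp (t : Trm V D) (S : Set V) : Prop :=
  ∀ v w : V → D, (∀ x ∈ S, v x = w x) → t v = t w

/-- A constraint only depends on (is supported by) the variables in `S`. -/
def Cns.supp (c : Cns V D) (S : Set V) : Prop :=
  ∀ v w : V → D, (∀ x ∈ S, v x = w x) → (c v ↔ c w)

/-- All the variables of the query lie in `S`. -/
def Query.suppBy (Q : Query V D Pr) (S : Set V) : Prop :=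
  (∀ t ∈ Q.args, Trm.supp t S) ∧ Cns.supp Q.constr S

/-- The query has finitely many variables (as every syntactic query does). -/
def Query.finSupp (Q : Query V D Pr) : Prop := ∃ S : Finset V, Q.suppBy ↑S

/-- The constraint s̃ = t̃ (componentwise equality of two sequences of terms). -/
def EqArgs (a b : List (Trm V D)) (v : V → D) : Prop :=
  a.length = b.length ∧ ∀ pr ∈ a.zip b, pr.1 v = pr.2 v

/-- A binary clause H ← c ◇ B. -/
structure Clause (V D Pr : Type) where
  hpred : Pr
  hargs : List (Trm V D)
  constr : Cns V D
  bpred : Pr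
  bargs : List (Trm V D)

/-- The query ⟨H | c⟩. -/
def Clause.headQuery (r : Clause V D Pr) : Query V D Pr := ⟨r.hpred, r.hargs, r.constr⟩
/-- The query ⟨B | c⟩. -/
def Clause.bodyQuery (r : Clause V D Pr) : Query V D Pr := ⟨r.bpred, r.bargs, r.constr⟩

/-- Applying a renaming to a clause (producing a variant of the clause). -/
def Clause.rename (γ : V ≃ V) (r : Clause V D Pr) : Clause V D Pr :=
  ⟨r.hpred, r.hargs.map (fun t v => t (v ∘ γ)), fun v => r.constr (v ∘ γ),
   r.bpred, r.bargs.map (fun t v => t (v ∘ γ))⟩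

/-- All the variables of the clause lie in `S`. -/
def Clause.suppBy (r : Clause V D Pr) (S : Set V) : Prop :=
  (∀ t ∈ r.hargs ++ r.bargs, Trm.supp t S) ∧ Cns.supp r.constr S

/-- The clause has finitely many variables. -/
def Clause.finSupp (r : Clause V D Pr) : Prop := ∃ S : Finset V, r.suppBy ↑S

/-- The constraint s̃ = ũ ∧ c ∧ d of the derived query, where the input clause is
    r' = p(s̃) ← c ◇ q(t̃) and the current query is Q = ⟨p(ũ) | d⟩. -/
def stepCns (r' : Clause V D Pr) (Q : Query V D Pr) : Cns V D :=
  fun v => EqArgs r'.hargs Q.args v ∧ r'.constr v ∧ Q.constr v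

/-- A derivation step Q ⟹_r Q₁: there is a variant r' of r variable-disjoint from Q
    (the input clause) such that the constraint s̃ = ũ ∧ c ∧ d is satisfiable, and
    Q₁ = ⟨q(t̃) | s̃ = ũ ∧ c ∧ d⟩. -/
def Step (r : Clause V D Pr) (Q Q₁ : Query V D Pr) : Prop :=
  ∃ γ : V ≃ V, ∃ S S' : Set V,
    Q.suppBy S ∧ (r.rename γ).suppBy S' ∧ Disjoint S S' ∧
    Q.pred = r.hpred ∧
    (∃ v, stepCns (r.rename γ) Q v) ∧
    Q₁ = ⟨(r.rename γ).bpred, (r.rename γ).bargs, stepCns (r.rename γ) Q⟩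

/-- Q₀ loops w.r.t. the program `Prog`: there is an infinite derivation of Prog ∪ {Q₀}. -/
def Loops (Prog : Set (Clause V D Pr)) (Q₀ : Query V D Pr) : Prop :=
  ∃ Qs : ℕ → Query V D Pr, Qs 0 = Q₀ ∧ ∀ n, ∃ r ∈ Prog, Step r (Qs n) (Qs (n + 1))

/-- Projection of a sequence onto a set of (0-based) positions, in increasing order. -/
def projArgs {α : Type} (s : Finset ℕ) (l : List α) : List α :=
  ((s.filter (· < l.length)).sort (· ≤ ·)).filterMap (fun i => l[i]?)

/-- Projection of a query on a set of positions τ. -/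
def Query.proj (τ : Pr → Finset ℕ) (Q : Query V D Pr) : Query V D Pr :=
  ⟨Q.pred, projArgs (τ Q.pred) Q.args, Q.constr⟩

/-- Projection of a query on the complementary set of positions τ̄. -/
def Query.coproj (τ : Pr → Finset ℕ) (Q : Query V D Pr) : Query V D Pr :=
  ⟨Q.pred, projArgs (Finset.range Q.args.length \ τ Q.pred) Q.args, Q.constr⟩

/-- A filter Δ = (τ, δ): a set of positions together with, for each predicate,
    a query over the projected predicate whose constraint is satisfiable. -/
structure PFilter (V D Pr : Type) where
  pos : Pr → Finset ℕ
  delta : Pr → Query V D Pr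
  delta_pred : ∀ p, (delta p).pred = p
  delta_sat : ∀ p, ∃ v, (delta p).constr v

/-- Q satisfies Δ when Set(Q|_τ) ⊆ Set(δ(rel(Q))). -/
def PFilter.Satisfies (Δ : PFilter V D Pr) (Q : Query V D Pr) : Prop :=
  (Q.proj Δ.pos).descSet ⊆ (Δ.delta Q.pred).descSet

/-- Q' is Δ-more general than Q. -/
def PFilter.MoreGen (Δ : PFilter V D Pr) (Q' Q : Query V D Pr) : Prop :=
  (Q.coproj Δ.pos).descSet ⊆ (Q'.coproj Δ.pos).descSet ∧ Δ.Satisfies Q'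

/-- Δ is derivation neutral (DN) for the clause r. -/
def PFilter.DN (Δ : PFilter V D Pr) (r : Clause V D Pr) : Prop :=
  ∀ Q Q₁ : Query V D Pr, Q.finSupp → Step r Q Q₁ →
    Δ.Satisfies Q₁ ∧
    ∀ Q' : Query V D Pr, Q'.finSupp → Δ.MoreGen Q' Q →
      ∃ Q₁', Step r Q' Q₁' ∧ Δ.MoreGen Q₁' Q₁

/-- sat(ũ, Q): taking a fresh variant of Q and existentially quantifying its variables,
    the values of ũ can be matched with the arguments of Q while its constraint holds. -/
def satC (us : List (Trm V D)) (Q : Query V D Pr) : Cns V D :=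
  fun v => ∃ w : V → D, us.length = Q.args.length ∧
    (∀ pr ∈ us.zip Q.args, pr.1 v = pr.2 w) ∧ Q.constr w

/-- First DNlog condition: D ⊨ c → ∀_{X̃|τ(p)} [sat(X̃|τ(p), δ(p)) → ∃_𝒴 c],
    with 𝒴 = Ỹ|τ(q) ∪ local_vars(r). -/
def DNlog1 (Δ : PFilter V D Pr) (p q : Pr) (Xs Ys : List V) (L : Set V) (c : Cns V D) : Prop :=
  ∀ v : V → D, c v →
    ∀ v' : V → D, (∀ x : V, x ∉ projArgs (Δ.pos p) Xs → v' x = v x) →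
      satC ((projArgs (Δ.pos p) Xs).map varT) (Δ.delta p) v' →
      ∃ w : V → D, (∀ x : V, x ∉ projArgs (Δ.pos q) Ys → x ∉ L → w x = v' x) ∧ c w

/-- Second DNlog condition: D ⊨ c → sat(Ỹ|τ(q), δ(q)). -/
def DNlog2 (Δ : PFilter V D Pr) (q : Pr) (Ys : List V) (c : Cns V D) : Prop :=
  ∀ v : V → D, c v → satC ((projArgs (Δ.pos q) Ys).map varT) (Δ.delta q) v

/-- Δ is DNlog for the clause p(X̃) ← c ◇ q(Ỹ) with local variables L. -/
def DNlog (Δ : PFilter V D Pr) (p q : Pr) (Xs Ys : List V) (L : Set V) (c : Cns V D) : Prop :=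
  DNlog1 Δ p q Xs Ys L c ∧ DNlog2 Δ q Ys c

end CLP

/-! Renaming the clause apart, ⟨H | c⟩ makes one step to a query describing at least the atoms
of ⟨B | c⟩, hence Δ-more general than ⟨H | c⟩. Derivation neutrality turns a step Q ⟹ Q₁ with
Q₁ Δ-more general than Q into a step Q₁ ⟹ Q₂ with Q₂ Δ-more general than Q₁, so this invariant
propagates forever and dependent choice yields the infinite derivation. -/

theorem exists_chain_of_serial {α : Type*} {R : α → α → Prop}
    (hR : ∀ a b, R a b → ∃ c, R b c) {a b : α} (hab : R a b) :
    ∃ f : ℕ → α, f 0 = a ∧ ∀ n, R (f n) (f (n + 1)) := by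
  have not_acc : ∀ b, (∃ a, R a b) → ¬Acc (flip R) b := by
    rintro b ⟨a, hab⟩ hacc
    induction hacc generalizing a with
    | intro b _ ih =>
      obtain ⟨c, hbc⟩ := hR a b hab
      exact ih c hbc b hbc
  exact not_acc_iff_exists_descending_chain.mp fun hacc => not_acc b ⟨a, hab⟩ (hacc.inv hab)

theorem Nat.exists_equiv_disjoint_image (S : Finset ℕ) :
    ∃ γ : ℕ ≃ ℕ, Disjoint (S : Set ℕ) (γ '' S) := by
  obtain ⟨N, hN⟩ : ∃ N, ∀ x ∈ S, x < N :=
    ⟨S.sup id + 1, fun x hx => Nat.lt_succ_of_le (Finset.le_sup (f := id) hx)⟩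
  let f : ℕ → ℕ := fun x => if x < N then x + N else if x < 2 * N then x - N else x
  have hf : Function.Involutive f := fun x => by simp only [f]; split_ifs <;> omega
  refine ⟨hf.toPerm, Set.disjoint_left.mpr ?_⟩
  rintro x hx ⟨y, hy, hyx⟩
  have hx := hN x hx
  have hy := hN y hy
  simp only [Function.Involutive.coe_toPerm, f, if_pos hy] at hyx
  omega

namespace CLP

variable {V D Pr : Type}

theorem Trm.supp.mono {t : Trm V D} {S S' : Set V} (h : Trm.supp t S) (hss : S ⊆ S') :
    Trm.supp t S' :=
  fun v w hvw => h v w fun x hx => hvw x (hss hx)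

theorem Cns.supp.mono {c : Cns V D} {S S' : Set V} (h : Cns.supp c S) (hss : S ⊆ S') :
    Cns.supp c S' :=
  fun v w hvw => h v w fun x hx => hvw x (hss hx)

theorem Query.suppBy.mono {Q : Query V D Pr} {S S' : Set V} (h : Q.suppBy S) (hss : S ⊆ S') :
    Q.suppBy S' :=
  ⟨fun t ht => (h.1 t ht).mono hss, h.2.mono hss⟩

theorem Clause.suppBy.mono {r : Clause V D Pr} {S S' : Set V} (h : r.suppBy S) (hss : S ⊆ S') :
    r.suppBy S' :=
  ⟨fun t ht => (h.1 t ht).mono hss, h.2.mono hss⟩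

theorem Clause.suppBy.headQuery {r : Clause V D Pr} {S : Set V} (h : r.suppBy S) :
    r.headQuery.suppBy S :=
  ⟨fun t ht => h.1 t (List.mem_append_left _ ht), h.2⟩

theorem Clause.suppBy.rename {r : Clause V D Pr} {S : Set V} (h : r.suppBy S) (γ : V ≃ V) :
    (r.rename γ).suppBy (γ '' S) := by
  have hvar : ∀ v w : V → D, (∀ x ∈ γ '' S, v x = w x) → ∀ x ∈ S, (v ∘ γ) x = (w ∘ γ) x :=
    fun v w hvw x hx => hvw (γ x) (Set.mem_image_of_mem γ hx)
  refine ⟨fun t' ht' v w hvw => ?_, fun v w hvw => h.2 _ _ (hvar v w hvw)⟩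
  rw [Clause.rename, ← List.map_append] at ht'
  obtain ⟨t, ht, rfl⟩ := List.mem_map.mp ht'
  exact h.1 t ht _ _ (hvar v w hvw)

theorem Cns.supp_eqArgs {a b : List (Trm V D)} {S : Set V}
    (ha : ∀ t ∈ a, Trm.supp t S) (hb : ∀ t ∈ b, Trm.supp t S) : Cns.supp (EqArgs a b) S := by
  intro v w hvw
  refine and_congr_right fun _ => forall₂_congr fun pr hpr => ?_
  rw [ha _ (List.of_mem_zip hpr).1 v w hvw, hb _ (List.of_mem_zip hpr).2 v w hvw]

theorem Cns.supp_stepCns {r' : Clause V D Pr} {Q : Query V D Pr} {S S' : Set V}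
    (hQ : Q.suppBy S) (hr' : r'.suppBy S') : Cns.supp (stepCns r' Q) (S ∪ S') := by
  replace hQ := hQ.mono (Set.subset_union_left (t := S'))
  replace hr' := hr'.mono (Set.subset_union_right (s := S))
  have hargs := Cns.supp_eqArgs (fun t ht => hr'.1 t (List.mem_append_left _ ht)) hQ.1
  exact fun v w hvw => and_congr (hargs v w hvw) (and_congr (hr'.2 v w hvw) (hQ.2 v w hvw))

theorem Query.finSupp.of_step {r : Clause V D Pr} {Q Q₁ : Query V D Pr}
    (hQ : Q.finSupp) (hr : r.finSupp) (hs : Step r Q Q₁) : Q₁.finSupp := by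
  classical
  obtain ⟨T, hT⟩ := hQ
  obtain ⟨T₀, hT₀⟩ := hr
  obtain ⟨γ, -, -, -, -, -, -, -, rfl⟩ := hs
  have hr' := hT₀.rename γ
  refine ⟨T ∪ T₀.map γ.toEmbedding, ?_, ?_⟩
  all_goals rw [Finset.coe_union, Finset.coe_map, Equiv.coe_toEmbedding]
  · exact fun t ht => (hr'.1 t (List.mem_append_right _ ht)).mono Set.subset_union_right
  · exact Cns.supp_stepCns hT hr'

theorem projArgs_map {α β : Type} (f : α → β) (s : Finset ℕ) (l : List α) :
    projArgs s (l.map f) = (projArgs s l).map f := by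
  unfold projArgs
  rw [List.length_map, List.map_filterMap]
  congr 1
  funext i
  simp [List.getElem?_map]

theorem Query.descSet_coproj_mono (τ : Pr → Finset ℕ) {Q₁ Q₂ : Query V D Pr}
    (h : Q₁.descSet ⊆ Q₂.descSet) : (Q₁.coproj τ).descSet ⊆ (Q₂.coproj τ).descSet := by
  rintro A ⟨v, hv, rfl⟩
  obtain ⟨w, hw, heq⟩ := h ⟨v, hv, rfl⟩
  simp only [Atom.mk.injEq] at heq
  obtain ⟨hpred, hargs⟩ := heq
  have hlen : Q₁.args.length = Q₂.args.length := by simpa using congrArg List.length hargs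
  refine ⟨w, hw, ?_⟩
  simp only [Query.coproj, hpred, hlen, ← projArgs_map, hargs]

theorem exists_eqOn_and_eqOn_comp {S : Set V} {γ : V ≃ V} (hdisj : Disjoint S (γ '' S))
    (w : V → D) : ∃ v : V → D, Set.EqOn v w S ∧ Set.EqOn (v ∘ γ) w S := by
  classical
  refine ⟨(γ '' S).piecewise (w ∘ γ.symm) w, fun x hx => ?_, fun x hx => ?_⟩
  · exact Set.piecewise_eq_of_notMem _ _ _ (hdisj.notMem_of_mem_left hx)
  · simp [Set.piecewise_eq_of_mem _ _ _ (Set.mem_image_of_mem γ hx)]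

theorem stepCns_rename_headQuery {r : Clause V D Pr} {S : Set V} (hr : r.suppBy S) {γ : V ≃ V}
    {v w : V → D} (hv : Set.EqOn v w S) (hvγ : Set.EqOn (v ∘ γ) w S) (hw : r.constr w) :
    stepCns (r.rename γ) r.headQuery v ∧
      (r.rename γ).bargs.map (fun t => t v) = r.bargs.map (fun t => t w) := by
  have hren : ∀ t ∈ r.hargs ++ r.bargs, t (v ∘ γ) = t w := fun t ht => hr.1 t ht _ _ hvγ
  have hid : ∀ t ∈ r.hargs, t v = t w := fun t ht => hr.1 t (List.mem_append_left _ ht) _ _ hv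
  refine ⟨⟨⟨by simp [Clause.rename, Clause.headQuery], ?_⟩, (hr.2 _ _ hvγ).mpr hw,
    (hr.2 _ _ hv).mpr hw⟩, ?_⟩
  · simp only [Clause.rename, Clause.headQuery]
    rw [List.zip_map_left, List.zip_eq_zipWith, List.zipWith_self, List.map_map]
    refine List.forall_mem_map.mpr fun t ht => ?_
    exact (hren t (List.mem_append_left _ ht)).trans (hid t ht).symm
  · simp only [Clause.rename, List.map_map]
    exact List.map_congr_left fun t ht => hren t (List.mem_append_right _ ht)

theorem exists_step_headQuery {r : Clause ℕ D Pr} (hr : r.finSupp) (hc : ∃ v, r.constr v) :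
    ∃ Q₁ : Query ℕ D Pr, Step r r.headQuery Q₁ ∧ r.bodyQuery.descSet ⊆ Q₁.descSet := by
  obtain ⟨S, hS⟩ := hr
  obtain ⟨γ, hdisj⟩ := Nat.exists_equiv_disjoint_image S
  have hkey : ∀ w, r.constr w → ∃ v, stepCns (r.rename γ) r.headQuery v ∧
      (r.rename γ).bargs.map (fun t => t v) = r.bargs.map (fun t => t w) := fun w hw =>
    let ⟨v, hv, hvγ⟩ := exists_eqOn_and_eqOn_comp hdisj w
    ⟨v, stepCns_rename_headQuery hS hv hvγ hw⟩
  refine ⟨⟨r.bpred, (r.rename γ).bargs, stepCns (r.rename γ) r.headQuery⟩,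
    ⟨γ, S, γ '' S, hS.headQuery, hS.rename γ, hdisj, rfl, ?_, rfl⟩, ?_⟩
  · obtain ⟨w, hw⟩ := hc
    obtain ⟨v, hv, -⟩ := hkey w hw
    exact ⟨v, hv⟩
  · rintro A ⟨w, hw, rfl⟩
    obtain ⟨v, hv, hargs⟩ := hkey w hw
    exact ⟨v, hv, by rw [hargs]; rfl⟩

theorem PFilter.DN.loops_of_step {Δ : PFilter V D Pr} {r : Clause V D Pr} (hdn : Δ.DN r)
    (hr : r.finSupp) {Q Q₁ : Query V D Pr} (hQ : Q.finSupp) (hs : Step r Q Q₁)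
    (hmg : Δ.MoreGen Q₁ Q) : Loops {r} Q := by
  let R Q Q₁ := Q.finSupp ∧ Step r Q Q₁ ∧ Δ.MoreGen Q₁ Q
  have hserial : ∀ Q Q₁, R Q Q₁ → ∃ Q₂, R Q₁ Q₂ := by
    rintro Q Q₁ ⟨hQ, hs, hmg⟩
    have hQ₁ := hQ.of_step hr hs
    obtain ⟨Q₂, hs₂, hmg₂⟩ := (hdn Q Q₁ hQ hs).2 Q₁ hQ₁ hmg
    exact ⟨Q₂, hQ₁, hs₂, hmg₂⟩
  obtain ⟨Qs, h0, hQs⟩ := exists_chain_of_serial hserial ⟨hQ, hs, hmg⟩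
  exact ⟨Qs, h0, fun n => ⟨r, rfl, (hQs n).2.1⟩⟩

end CLP

theorem head_loops_of_dn {D Pr : Type} (r : CLP.Clause ℕ D Pr) (Δ : CLP.PFilter ℕ D Pr)
    (hr : r.finSupp) (hc : ∃ v, r.constr v)
    (hdn : Δ.DN r) (hmg : Δ.MoreGen r.bodyQuery r.headQuery) :
    CLP.Loops {r} r.headQuery := by
  have hH : r.headQuery.finSupp := let ⟨S, hS⟩ := hr; ⟨S, hS.headQuery⟩
  obtain ⟨Q₁, hstep, hbody⟩ := CLP.exists_step_headQuery hr hc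
  have hmg₁ : Δ.MoreGen Q₁ r.headQuery :=
    ⟨hmg.1.trans (CLP.Query.descSet_coproj_mono Δ.pos hbody), (hdn _ _ hH hstep).1⟩
  exact hdn.loops_of_step hr hH hstep hmg₁
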